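/- arXiv:2003.05939 — 6 statements merged into one kernel-verified Lean document; each statement's English description precedes it below -/
import Mathlib

section
/- Let G₁ and G₂ be abelian groups, and let A be a finite subset of G₁ \ {0} of size k with ∑_{z∈A} z ≠ 0. Suppose φ : G₁ → G₂ is a group homomorphism whose kernel is disjoint from the set Υ(A) = A ∪ {x−y : x,y ∈ A, x≠y} ∪ {∑_{z∈A} z}. If every subset B of G₂ \ {0} of size k with ∑_{z∈B} z ≠ 0 admits an ordering whose partial sums are nonzero and pairwise distinct, then A admits an ordering (a₁,…,a_k) of its elements such that all partial sums s_i = a₁+⋯+a_i are nonzero and pairwise distinct. -/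
/-- An ordering of the finite set `A` (as a list) whose partial sums are all nonzero
and pairwise distinct. -/
def IsAlspachOrdering {G : Type*} [AddCommGroup G] (A : Finset G) (l : List G) : Prop :=
  l.Nodup ∧ (∀ x, x ∈ l ↔ x ∈ A) ∧
    (∀ i : ℕ, 1 ≤ i → i ≤ l.length → (l.take i).sum ≠ 0) ∧
    (∀ i j : ℕ, 1 ≤ i → i < j → j ≤ l.length → (l.take i).sum ≠ (l.take j).sum)

/-! A homomorphism whose kernel misses `Υ(A)` is injective on `A` and maps `A` onto a nice set of
the same size. Lifting an Alspach ordering of that set back to `A`, each partial sum maps to the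
corresponding partial sum downstairs, so the lifted ones are nonzero and distinct as well. -/

section

variable {G₁ G₂ : Type*} [AddCommGroup G₁] [AddCommGroup G₂]
  {A : Finset G₁} {φ : G₁ →+ G₂}

theorem AddMonoidHom.injOn_of_map_sub_ne_zero
    (h : ∀ x ∈ A, ∀ y ∈ A, x ≠ y → φ (x - y) ≠ 0) : Set.InjOn φ A := by
  intro x hx y hy hxy
  by_contra hne
  exact h x hx y hy hne (by rw [map_sub, hxy, sub_self])

theorem IsAlspachOrdering.of_map [DecidableEq G₂] (hφ : Set.InjOn φ A) {l : List G₁}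
    (hlA : ∀ x ∈ l, x ∈ A)
    (h : IsAlspachOrdering (A.image φ) (l.map φ)) : IsAlspachOrdering A l := by
  obtain ⟨hnodup, hmem, hne_zero, hne⟩ := h
  have hsum_take (i : ℕ) : φ (l.take i).sum = ((l.map φ).take i).sum := by
    rw [map_list_sum, List.map_take]
  refine ⟨hnodup.of_map φ, fun x => ⟨hlA x, fun hx => ?_⟩, fun i hi hil hzero => ?_,
    fun i j hi hij hjl heq => ?_⟩
  · obtain ⟨y, hy, hyx⟩ := List.mem_map.1 ((hmem (φ x)).2 (Finset.mem_image_of_mem φ hx))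
    rwa [← hφ (hlA y hy) hx hyx]
  · exact hne_zero i hi (by simpa using hil) (by rw [← hsum_take, hzero, map_zero])
  · exact hne i j hi hij (by simpa using hjl) (by rw [← hsum_take, ← hsum_take, heq])

theorem IsAlspachOrdering.exists_of_image [DecidableEq G₂] (hφ : Set.InjOn φ A) {m : List G₂}
    (h : IsAlspachOrdering (A.image φ) m) : ∃ l : List G₁, IsAlspachOrdering A l := by
  have hm : m ∈ Set.range (List.map fun a : A => φ a) := by
    rw [Set.range_list_map]
    intro b hb
    obtain ⟨a, ha, rfl⟩ := Finset.mem_image.1 ((h.2.1 b).1 hb)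
    exact ⟨⟨a, ha⟩, rfl⟩
  obtain ⟨l, rfl⟩ := hm
  refine ⟨l.map Subtype.val, of_map hφ (fun x hx => ?_) ?_⟩
  · obtain ⟨a, -, rfl⟩ := List.mem_map.1 hx
    exact a.2
  · rwa [List.map_map]

end

theorem stmt0_general {G₁ G₂ : Type*} [AddCommGroup G₁] [AddCommGroup G₂]
    (k : ℕ) (A : Finset G₁) (hcard : A.card = k)
    (φ : G₁ →+ G₂)
    (hker : ∀ g : G₁, φ g = 0 →
      g ∉ ((A : Set G₁) ∪ {d | ∃ x ∈ A, ∃ y ∈ A, x ≠ y ∧ d = x - y} ∪ {∑ z ∈ A, z}))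
    (hG₂ : ∀ B : Finset G₂, (0 : G₂) ∉ B → B.card = k → ∑ z ∈ B, z ≠ 0 →
      ∃ l : List G₂, IsAlspachOrdering B l) :
    ∃ l : List G₁, IsAlspachOrdering A l := by
  classical
  have hinj : Set.InjOn φ A := φ.injOn_of_map_sub_ne_zero fun x hx y hy hxy hzero =>
    hker _ hzero (Or.inl (Or.inr ⟨x, hx, y, hy, hxy, rfl⟩))
  have hzero : (0 : G₂) ∉ A.image φ := by
    simp only [Finset.mem_image, not_exists, not_and]
    exact fun a ha hφa => hker a hφa (Or.inl (Or.inl ha))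
  have hsum : ∑ z ∈ A.image φ, z ≠ 0 := by
    rw [Finset.sum_image fun x hx y hy => hinj hx hy, ← map_sum]
    exact fun h => hker _ h (Or.inr rfl)
  obtain ⟨m, hm⟩ := hG₂ _ hzero (by rw [Finset.card_image_of_injOn hinj, hcard]) hsum
  exact hm.exists_of_image hinj

theorem stmt0 {G₁ G₂ : Type*} [AddCommGroup G₁] [AddCommGroup G₂]
    (k : ℕ) (A : Finset G₁) (hA0 : (0 : G₁) ∉ A) (hcard : A.card = k)
    (hsum : ∑ z ∈ A, z ≠ 0) (φ : G₁ →+ G₂)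
    (hker : ∀ g : G₁, φ g = 0 →
      g ∉ ((A : Set G₁) ∪ {d | ∃ x ∈ A, ∃ y ∈ A, x ≠ y ∧ d = x - y} ∪ {∑ z ∈ A, z}))
    (hG₂ : ∀ B : Finset G₂, (0 : G₂) ∉ B → B.card = k → ∑ z ∈ B, z ≠ 0 →
      ∃ l : List G₂, IsAlspachOrdering B l) :
    ∃ l : List G₁, IsAlspachOrdering A l :=
  stmt0_general k A hcard φ hker hG₂
end

section
/- Let k be a positive integer. Suppose that for infinitely many primes p, every subset A of ℤ/pℤ \ {0} of size k with ∑_{z∈A} z ≠ 0 admits an ordering whose partial sums are nonzero and pairwise distinct. Then every subset A of ℤ \ {0} of size k with ∑_{z∈A} z ≠ 0 admits an ordering of its elements whose partial sums are nonzero and pairwise distinct. -/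
theorem stmt1 (k : ℕ) (hk : 0 < k)
    (hp : ∀ N : ℕ, ∃ p : ℕ, N < p ∧ p.Prime ∧
      ∀ A : Finset (ZMod p), (0 : ZMod p) ∉ A → A.card = k → ∑ z ∈ A, z ≠ 0 →
        ∃ l : List (ZMod p), IsAlspachOrdering A l) :
    ∀ A : Finset ℤ, (0 : ℤ) ∉ A → A.card = k → ∑ z ∈ A, z ≠ 0 →
      ∃ l : List ℤ, IsAlspachOrdering A l := by
  intro A hA0 hAcard hAsum
  classical
  set M : ℤ := ∑ a ∈ A, |a| with hM
  have habs : ∀ x ∈ A, |x| ≤ M := fun x hx =>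
    Finset.single_le_sum (f := fun a => |a|) (fun a _ => abs_nonneg a) hx
  have hM0 : 0 ≤ M := Finset.sum_nonneg fun a _ => abs_nonneg a
  obtain ⟨p, hpN, hpp, hprop⟩ := hp (2 * M).toNat
  have hp2M : 2 * M < (p : ℤ) := by
    have h1 : ((2 * M).toNat : ℤ) < (p : ℤ) := by exact_mod_cast hpN
    rwa [Int.toNat_of_nonneg (by linarith)] at h1
  -- key injectivity-type fact
  have key : ∀ x : ℤ, |x| < (p : ℤ) → x ≠ 0 → (x : ZMod p) ≠ 0 := by
    intro x hx hx0 h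
    rw [ZMod.intCast_zmod_eq_zero_iff_dvd] at h
    exact hx0 (Int.eq_zero_of_abs_lt_dvd h hx)
  have hinj : ∀ x ∈ A, ∀ y ∈ A, ((x : ℤ) : ZMod p) = (y : ZMod p) → x = y := by
    intro x hx y hy hxy
    by_contra hne
    have h0 : ((x - y : ℤ) : ZMod p) ≠ 0 := by
      apply key
      · calc |x - y| ≤ |x| + |y| := abs_sub x y
          _ ≤ M + M := add_le_add (habs x hx) (habs y hy)
          _ < (p : ℤ) := by linarith
      · exact sub_ne_zero_of_ne hne
    apply h0
    push_cast
    rw [hxy, sub_self]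
  set B : Finset (ZMod p) := A.image (fun a : ℤ => (a : ZMod p)) with hB
  have hB0 : (0 : ZMod p) ∉ B := by
    intro h
    obtain ⟨a, ha, ha0⟩ := Finset.mem_image.mp h
    exact key a (lt_of_le_of_lt (habs a ha) (by linarith)) (fun h => hA0 (h ▸ ha)) ha0
  have hBcard : B.card = k := by
    rw [hB, Finset.card_image_of_injOn hinj, hAcard]
  have hBsumEq : ∑ z ∈ B, z = ((∑ z ∈ A, z : ℤ) : ZMod p) := by
    rw [hB, Finset.sum_image hinj]
    push_cast
    rfl
  have hBsum : ∑ z ∈ B, z ≠ 0 := by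
    rw [hBsumEq]
    exact key _ (lt_of_le_of_lt (le_trans (Finset.abs_sum_le_sum_abs _ _) (le_refl M))
      (by linarith)) hAsum
  obtain ⟨l', hnd', hmem', hnz', hdist'⟩ := hprop B hB0 hBcard hBsum
  -- lift l' to a list of integers
  set f : ZMod p → ℤ := fun b =>
    if h : ∃ a ∈ A, ((a : ℤ) : ZMod p) = b then h.choose else 0 with hf
  have hfspec : ∀ b ∈ B, f b ∈ A ∧ ((f b : ℤ) : ZMod p) = b := by
    intro b hb
    obtain ⟨a, ha, hab⟩ := Finset.mem_image.mp hb
    have h : ∃ a ∈ A, ((a : ℤ) : ZMod p) = b := ⟨a, ha, hab⟩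
    simp only [hf, dif_pos h]
    exact ⟨h.choose_spec.1, h.choose_spec.2⟩
  set l : List ℤ := l'.map f with hl
  have hlmem : ∀ b ∈ l', f b ∈ A ∧ ((f b : ℤ) : ZMod p) = b :=
    fun b hb => hfspec b ((hmem' b).mp hb)
  have hmap : l.map (fun a : ℤ => (a : ZMod p)) = l' := by
    rw [hl, List.map_map]
    conv_rhs => rw [← List.map_id l']
    exact List.map_congr_left fun b hb => (hlmem b hb).2
  have hlen : l.length = l'.length := by rw [hl, List.length_map]
  have hsum : ∀ i : ℕ, (((l.take i).sum : ℤ) : ZMod p) = (l'.take i).sum := by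
    intro i
    rw [Int.cast_list_sum, hl, ← List.map_take, List.map_map]
    congr 1
    conv_rhs => rw [← List.map_id (l'.take i)]
    exact List.map_congr_left fun b hb => (hlmem b (List.mem_of_mem_take hb)).2
  refine ⟨l, ?_, ?_, ?_, ?_⟩
  · apply List.Nodup.map_on ?_ hnd'
    intro x hx y hy hxy
    rw [← (hlmem x hx).2, ← (hlmem y hy).2, hxy]
  · intro x
    constructor
    · intro hx
      obtain ⟨b, hb, rfl⟩ := List.mem_map.mp hx
      exact (hlmem b hb).1
    · intro hx
      have hbx : ((x : ℤ) : ZMod p) ∈ B := Finset.mem_image_of_mem _ hx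
      have hbl : ((x : ℤ) : ZMod p) ∈ l' := (hmem' _).mpr hbx
      have := hlmem _ hbl
      have hx' : f ((x : ℤ) : ZMod p) = x := hinj _ this.1 _ hx this.2
      rw [hl]
      exact List.mem_map.mpr ⟨_, hbl, hx'⟩
  · intro i hi hil h0
    apply hnz' i hi (hlen ▸ hil)
    rw [← hsum i, h0, Int.cast_zero]
  · intro i j hi hij hjl h0
    apply hdist' i j hi hij (hlen ▸ hjl)
    rw [← hsum i, ← hsum j, h0]
end

section
/- Let k be a positive integer and suppose that every subset of ℤ \ {0} of size k with nonzero sum admits an ordering whose partial sums are nonzero and pairwise distinct. Then for every n ≥ 2, every subset A of ℤⁿ \ {0} of size k with ∑_{z∈A} z ≠ 0 admits an ordering of its elements whose partial sums are nonzero and pairwise distinct. -/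
lemma geom_bound (B M : ℤ) (hB : 0 ≤ B) (hM : B + 1 ≤ M) (j : ℕ) :
    B * ∑ i ∈ Finset.range j, M ^ i < M ^ j := by
  induction j with
  | zero => simp
  | succ j ih =>
    have hM1 : (1 : ℤ) ≤ M := by linarith
    have hMj : (0 : ℤ) < M ^ j := pow_pos (by linarith) j
    rw [Finset.sum_range_succ, mul_add]
    calc B * ∑ i ∈ Finset.range j, M ^ i + B * M ^ j
        < M ^ j + B * M ^ j := by linarith
      _ = (B + 1) * M ^ j := by ring
      _ ≤ M * M ^ j := mul_le_mul_of_nonneg_right hM hMj.le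
      _ = M ^ (j + 1) := by ring

lemma key (n : ℕ) (B M : ℤ) (hB : 0 ≤ B) (hM : B + 1 ≤ M) (x : Fin n → ℤ)
    (hx : x ≠ 0) (hbd : ∀ i, |x i| ≤ B) : ∑ i, x i * M ^ (i : ℕ) ≠ 0 := by
  have hM0 : (0 : ℤ) < M := by linarith
  set f : ℕ → ℤ := fun i => if h : i < n then x ⟨i, h⟩ else 0 with hf
  have hsum : ∑ i, x i * M ^ (i : ℕ) = ∑ i ∈ Finset.range n, f i * M ^ i := by
    rw [Finset.sum_range fun i => f i * M ^ i]
    apply Finset.sum_congr rfl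
    intro i _
    simp [hf, i.isLt]
  obtain ⟨i₀, hi₀⟩ : ∃ i, x i ≠ 0 := by
    by_contra h
    push_neg at h
    exact hx (funext h)
  set j := Nat.findGreatest (fun i => f i ≠ 0) n with hjdef
  have hP : f (i₀ : ℕ) ≠ 0 := by
    have he : f (i₀ : ℕ) = x i₀ := by simp [hf, i₀.isLt]
    rw [he]; exact hi₀
  have hj : f j ≠ 0 := Nat.findGreatest_spec (P := fun i => f i ≠ 0) (le_of_lt i₀.isLt) hP
  have hjn : j < n := by
    by_contra h
    exact hj (by simp [hf, h])
  have hzero : ∀ i, j < i → f i = 0 := by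
    intro i hi
    by_cases hin : i ≤ n
    · by_contra h
      exact Nat.findGreatest_is_greatest hi hin h
    · exact dif_neg (by omega)
  have hstep : ∑ i ∈ Finset.range n, f i * M ^ i = ∑ i ∈ Finset.range (j + 1), f i * M ^ i := by
    refine (Finset.sum_subset (Finset.range_subset_range.mpr hjn) ?_).symm
    intro i _ hi
    rw [Finset.mem_range, not_lt] at hi
    rw [hzero i (by omega), zero_mul]
  have hfb : ∀ i, |f i| ≤ B := by
    intro i
    by_cases h : i < n
    · simpa [hf, h] using hbd ⟨i, h⟩
    · simp [hf, h, hB]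
  have hrest : |∑ i ∈ Finset.range j, f i * M ^ i| < M ^ j := by
    calc |∑ i ∈ Finset.range j, f i * M ^ i| ≤ ∑ i ∈ Finset.range j, |f i * M ^ i| :=
          Finset.abs_sum_le_sum_abs _ _
      _ ≤ ∑ i ∈ Finset.range j, B * M ^ i := by
          apply Finset.sum_le_sum
          intro i _
          rw [abs_mul, abs_pow, abs_of_pos hM0]
          exact mul_le_mul_of_nonneg_right (hfb i) (pow_nonneg hM0.le i)
      _ = B * ∑ i ∈ Finset.range j, M ^ i := by rw [Finset.mul_sum]
      _ < M ^ j := geom_bound B M hB hM j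
  have hbig : M ^ j ≤ |f j * M ^ j| := by
    rw [abs_mul, abs_pow, abs_of_pos hM0]
    exact le_mul_of_one_le_left (pow_nonneg hM0.le j) (Int.one_le_abs hj)
  rw [hsum, hstep, Finset.sum_range_succ]
  intro h0
  have : f j * M ^ j = -(∑ i ∈ Finset.range j, f i * M ^ i) := by linarith
  rw [this, abs_neg] at hbig
  linarith

def coordHom (n : ℕ) (M : ℤ) : (Fin n → ℤ) →+ ℤ where
  toFun x := ∑ i, x i * M ^ (i : ℕ)
  map_zero' := by simp
  map_add' x y := by simp [add_mul, Finset.sum_add_distrib]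

theorem stmt3 (k : ℕ) (hk : 0 < k)
    (hZ : ∀ A : Finset ℤ, (0 : ℤ) ∉ A → A.card = k → ∑ z ∈ A, z ≠ 0 →
      ∃ l : List ℤ, IsAlspachOrdering A l) :
    ∀ n : ℕ, 2 ≤ n →
      ∀ A : Finset (Fin n → ℤ), (0 : Fin n → ℤ) ∉ A → A.card = k → ∑ z ∈ A, z ≠ 0 →
        ∃ l : List (Fin n → ℤ), IsAlspachOrdering A l := by
  intro n hn A h0A hcard hsumA
  set B : ℤ := ∑ a ∈ A, ∑ i, |a i| with hB
  have hB0 : 0 ≤ B :=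
    Finset.sum_nonneg fun a _ => Finset.sum_nonneg fun i _ => abs_nonneg _
  set M : ℤ := B + 1 with hM
  set φ : (Fin n → ℤ) →+ ℤ := coordHom n M with hφ
  have hφ_apply : ∀ x : Fin n → ℤ, φ x = ∑ i, x i * M ^ (i : ℕ) := fun x => rfl
  -- coordinate bounds
  have hmem_bd : ∀ a ∈ A, ∀ i, |a i| ≤ B := by
    intro a ha i
    calc |a i| ≤ ∑ i, |a i| := Finset.single_le_sum (f := fun i => |a i|) (fun i _ => abs_nonneg _) (Finset.mem_univ i)
      _ ≤ B := Finset.single_le_sum (f := fun a => ∑ i, |a i|)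
          (fun a _ => Finset.sum_nonneg fun i _ => abs_nonneg _) ha
  have hkey : ∀ x : Fin n → ℤ, x ≠ 0 → (∀ i, |x i| ≤ B) → φ x ≠ 0 := by
    intro x hx hbd
    rw [hφ_apply]
    exact key n B M hB0 (by linarith) x hx hbd
  -- injectivity on A
  have hinj : Set.InjOn φ ↑A := by
    intro a ha b hb hab
    by_contra hne
    have hdbd : ∀ i, |a i - b i| ≤ B := by
      intro i
      have h2 : |a i| + |b i| ≤ B := by
        calc |a i| + |b i| = ∑ c ∈ ({a, b} : Finset (Fin n → ℤ)), ∑ i', |c i'|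
              - (∑ i', |a i'| - |a i|) - (∑ i', |b i'| - |b i|) := by
              rw [Finset.sum_pair hne]
              have ha' : |a i| ≤ ∑ i', |a i'| :=
                Finset.single_le_sum (f := fun i' => |a i'|) (fun i' _ => abs_nonneg _) (Finset.mem_univ i)
              ring
          _ ≤ ∑ c ∈ ({a, b} : Finset (Fin n → ℤ)), ∑ i', |c i'| := by
              have ha' :  |a i| ≤ ∑ i', |a i'| :=
                Finset.single_le_sum (f := fun i' => |a i'|) (fun i' _ => abs_nonneg _) (Finset.mem_univ i)
              have hb' :  |b i| ≤ ∑ i', |b i'| :=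
                Finset.single_le_sum (f := fun i' => |b i'|) (fun i' _ => abs_nonneg _) (Finset.mem_univ i)
              linarith
          _ ≤ B := Finset.sum_le_sum_of_subset_of_nonneg
              (by intro c hc
                  simp only [Finset.mem_insert, Finset.mem_singleton] at hc
                  rcases hc with rfl | rfl
                  · simpa using ha
                  · simpa using hb)
              (fun c _ _ => Finset.sum_nonneg fun i' _ => abs_nonneg _)
      calc |a i - b i| ≤ |a i| + |b i| := abs_sub _ _
        _ ≤ B := h2
    have : φ (a - b) ≠ 0 := hkey (a - b) (sub_ne_zero.mpr hne) (by simpa using hdbd)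
    rw [map_sub, hab, sub_self] at this
    exact this rfl
  -- image set
  set A' : Finset ℤ := A.image φ with hA'
  have h0A' : (0 : ℤ) ∉ A' := by
    rw [hA', Finset.mem_image]
    rintro ⟨a, ha, ha0⟩
    exact hkey a (fun h => h0A (h ▸ ha)) (hmem_bd a ha) ha0
  have hcard' : A'.card = k := by
    rw [hA', Finset.card_image_of_injOn hinj, hcard]
  have hsum' : ∑ z ∈ A', z ≠ 0 := by
    rw [hA', Finset.sum_image fun a ha b hb => hinj ha hb]
    rw [← map_sum]
    apply hkey _ hsumA
    intro i
    have : (∑ z ∈ A, z) i = ∑ a ∈ A, a i := by simp [Finset.sum_apply]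
    rw [this]
    calc |∑ a ∈ A, a i| ≤ ∑ a ∈ A, |a i| := Finset.abs_sum_le_sum_abs _ _
      _ ≤ B := Finset.sum_le_sum fun a _ =>
          Finset.single_le_sum (f := fun i' => |a i'|) (fun i' _ => abs_nonneg _) (Finset.mem_univ i)
  obtain ⟨l', hnd', hmem', h1', h2'⟩ := hZ A' h0A' hcard' hsum'
  -- pull back
  set ψ : ℤ → (Fin n → ℤ) := Function.invFunOn φ ↑A with hψ
  have himg : ∀ y ∈ A', y ∈ φ '' ↑A := by
    intro y hy
    rw [hA', Finset.mem_image] at hy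
    obtain ⟨a, ha, rfl⟩ := hy
    exact ⟨a, ha, rfl⟩
  have hψmem : ∀ y ∈ A', ψ y ∈ A := fun y hy => Function.invFunOn_mem (himg y hy)
  have hψeq : ∀ y ∈ A', φ (ψ y) = y := fun y hy => Function.invFunOn_eq (himg y hy)
  have hleft : ∀ a ∈ A, ψ (φ a) = a := fun a ha => hinj.leftInvOn_invFunOn ha
  refine ⟨l'.map ψ, ?_, ?_, ?_, ?_⟩
  · refine List.Nodup.map_on ?_ hnd'
    intro x hx y hy hxy
    rw [← hψeq x ((hmem' x).mp hx), ← hψeq y ((hmem' y).mp hy), hxy]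
  · intro x
    constructor
    · intro hx
      rw [List.mem_map] at hx
      obtain ⟨y, hy, rfl⟩ := hx
      exact hψmem y ((hmem' y).mp hy)
    · intro hx
      rw [List.mem_map]
      exact ⟨φ x, (hmem' _).mpr (Finset.mem_image_of_mem φ hx), hleft x hx⟩
  all_goals {
    have hφsum : ∀ i : ℕ, φ (((l'.map ψ).take i).sum) = (l'.take i).sum := by
      intro i
      rw [← List.map_take, map_list_sum, List.map_map]
      congr 1
      rw [show (φ ∘ ψ) = fun y => φ (ψ y) from rfl]
      refine List.map_congr_left ?_ |>.trans (List.map_id _)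
      intro y hy
      exact hψeq y ((hmem' y).mp (List.mem_of_mem_take hy))
    first
    | { intro i hi1 hi2 h0
        refine h1' i hi1 (by simpa using hi2) ?_
        rw [← hφsum i, h0, map_zero] }
    | { intro i j hi1 hij hj h0
        refine h2' i j hi1 hij (by simpa using hj) ?_
        rw [← hφsum i, ← hφsum j, h0] }
  }
end

section
/- Every subset A of any torsion-free abelian group G with 0 ∉ A, |A| ≤ 11, and ∑_{z∈A} z ≠ 0 admits an ordering of its elements whose partial sums are all nonzero and pairwise distinct. -/
open Function

namespace List

variable {M N : Type*} [AddMonoid M] [AddMonoid N]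

theorem scanl_add_map (f : M →+ N) (a : M) (l : List M) :
    (l.map f).scanl (· + ·) (f a) = (l.scanl (· + ·) a).map f := by
  induction l generalizing a with
  | nil => rfl
  | cons x l ih => simp [← ih, map_add]

theorem scanl_add_zero_map (f : M →+ N) (l : List M) :
    (l.map f).scanl (· + ·) 0 = (l.scanl (· + ·) 0).map f := by
  simpa using scanl_add_map f 0 l

theorem scanl_add_add (a b : M) (l : List M) :
    l.scanl (· + ·) (a + b) = (l.scanl (· + ·) b).map (a + ·) := by
  induction l generalizing b with
  | nil => rfl
  | cons x l ih => simp [add_assoc, ih]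

theorem scanl_add_zero_cons (x : M) (l : List M) :
    (x :: l).scanl (· + ·) 0 = 0 :: (l.scanl (· + ·) 0).map (x + ·) := by
  simpa using scanl_add_add x 0 l

theorem scanl_add_zero_concat (l : List M) (x : M) :
    (l ++ [x]).scanl (· + ·) 0 = l.scanl (· + ·) 0 ++ [l.sum + x] := by
  simp [scanl_append, sum_eq_foldl]

theorem nodup_scanl_add_zero_cons_iff {G : Type*} [AddLeftCancelMonoid G] (x : G) (l : List G) :
    ((x :: l).scanl (· + ·) 0).Nodup ↔
      (l.scanl (· + ·) 0).Nodup ∧ ∀ s ∈ l.scanl (· + ·) 0, x + s ≠ 0 := by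
  rw [scanl_add_zero_cons, nodup_cons, nodup_map_iff (add_right_injective x), and_comm]
  simp

theorem nodup_scanl_add_zero_concat_iff (l : List M) (x : M) :
    ((l ++ [x]).scanl (· + ·) 0).Nodup ↔
      (l.scanl (· + ·) 0).Nodup ∧ l.sum + x ∉ l.scanl (· + ·) 0 := by
  rw [scanl_add_zero_concat, ← concat_eq_append, nodup_concat, and_comm]

theorem getElem_scanl_add_zero (l : List M) {i : ℕ} (hi : i < (l.scanl (· + ·) 0).length) :
    (l.scanl (· + ·) 0)[i] = (l.take i).sum := by
  simp [sum_eq_foldl]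

end List

section LinearOrder

variable {K : Type*} [AddCommGroup K] [LinearOrder K] [IsOrderedAddMonoid K]

theorem Finset.exists_pos_mem_erase_eq_empty_or_sum_ne_zero {A : Finset K} (h0 : (0 : K) ∉ A)
    (hA : 0 < ∑ x ∈ A, x) :
    ∃ e ∈ A, 0 < e ∧ (A.erase e = ∅ ∨ ∑ x ∈ A.erase e, x ≠ 0) := by
  classical
  by_cases h : ∃ e ∈ A, 0 < e ∧ e ≠ ∑ x ∈ A, x
  · obtain ⟨e, he, he0, hne⟩ := h
    refine ⟨e, he, he0, Or.inr ?_⟩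
    rw [Finset.sum_erase_eq_sub he, sub_ne_zero]
    exact hne.symm
  push Not at h
  obtain ⟨e, he, he0⟩ : ∃ e ∈ A, 0 < e := by
    simpa using Finset.exists_lt_of_sum_lt (f := fun _ => (0 : K)) (g := id) (by simpa using hA)
  have hneg : ∀ x ∈ A.erase e, x < 0 := by
    intro x hx
    obtain ⟨hxe, hxA⟩ := Finset.mem_erase.1 hx
    refine lt_of_not_ge fun hx0 => ?_
    have hx0 : 0 < x := lt_of_le_of_ne hx0 (fun h => h0 (h ▸ hxA))
    exact hxe ((h x hxA hx0).trans (h e he he0).symm)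
  refine ⟨e, he, he0, or_iff_not_imp_right.2 fun hs => ?_⟩
  push Not at hs
  rw [Finset.sum_eq_zero_iff_of_nonpos fun x hx => (hneg x hx).le] at hs
  exact Finset.eq_empty_of_forall_notMem fun x hx => (hneg x hx).ne (hs x hx)

theorem exists_nodup_scanl_of_linearOrder (A : Finset K) (h0 : (0 : K) ∉ A)
    (hA : A = ∅ ∨ ∑ x ∈ A, x ≠ 0) :
    ∃ l : List K, (l : Multiset K) = A.val ∧ (l.scanl (· + ·) 0).Nodup ∧
      ∀ s ∈ l.scanl (· + ·) 0, min 0 (∑ x ∈ A, x) ≤ s := by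
  classical
  induction A using Finset.strongInduction with
  | H A ih =>
  rcases lt_trichotomy (∑ x ∈ A, x) 0 with hneg | hzero | hpos
  · obtain ⟨e, he, he0, he'⟩ : ∃ e ∈ A, e < 0 ∧ (A.erase e = ∅ ∨ ∑ x ∈ A.erase e, x ≠ 0) :=
      Finset.exists_pos_mem_erase_eq_empty_or_sum_ne_zero (K := Kᵒᵈ) h0 hneg
    obtain ⟨l, hl, hS, hbound⟩ := ih _ (Finset.erase_ssubset he)
      (fun h => h0 (Finset.mem_of_mem_erase h)) he'
    have hlsum : l.sum + e = ∑ x ∈ A, x := by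
      rw [← Multiset.sum_coe, hl, ← Finset.sum_erase_add _ _ he]
      exact congrArg (· + e) (Finset.sum_val _)
    have hlow : ∀ s ∈ l.scanl (· + ·) 0, ∑ x ∈ A, x < s := by
      refine fun s hs => (lt_min hneg ?_).trans_le (hbound s hs)
      rw [Finset.sum_erase_eq_sub he]
      exact lt_sub_iff_add_lt.2 (add_lt_of_neg_right _ he0)
    refine ⟨l ++ [e], ?_, ?_, ?_⟩
    · rw [Multiset.coe_eq_coe.2 (List.perm_append_singleton e l), ← Multiset.cons_coe, hl,
        Finset.erase_val, Multiset.cons_erase he]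
    · rw [List.nodup_scanl_add_zero_concat_iff, hlsum]
      exact ⟨hS, fun h => (hlow _ h).false⟩
    · rw [List.scanl_add_zero_concat, hlsum, List.forall_mem_append, List.forall_mem_singleton]
      exact ⟨fun s hs => (min_le_right _ _).trans (hlow s hs).le, min_le_right _ _⟩
  · obtain rfl := hA.resolve_right (not_not.2 hzero)
    exact ⟨[], rfl, by simp, by simp⟩
  · obtain ⟨e, he, he0, he'⟩ := Finset.exists_pos_mem_erase_eq_empty_or_sum_ne_zero h0 hpos
    obtain ⟨l, hl, hS, hbound⟩ := ih _ (Finset.erase_ssubset he)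
      (fun h => h0 (Finset.mem_of_mem_erase h)) he'
    have hshift : ∀ s ∈ l.scanl (· + ·) 0, 0 < e + s := by
      intro s hs
      rcases min_le_iff.1 (hbound s hs) with h | h
      · exact add_pos_of_pos_of_nonneg he0 h
      · rw [Finset.sum_erase_eq_sub he, sub_le_iff_le_add'] at h
        exact hpos.trans_le h
    refine ⟨e :: l, ?_, ?_, ?_⟩
    · rw [← Multiset.cons_coe, hl, Finset.erase_val, Multiset.cons_erase he]
    · rw [List.nodup_scanl_add_zero_cons_iff]
      exact ⟨hS, fun s hs => (hshift s hs).ne'⟩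
    · rw [List.scanl_add_zero_cons, List.forall_mem_cons, List.forall_mem_map]
      exact ⟨min_le_left _ _, fun s hs => (min_le_left _ _).trans (hshift s hs).le⟩

end LinearOrder

section AddCommGroup

variable {G : Type*} [AddCommGroup G]

theorem isAlspachOrdering_of_nodup_scanl {A : Finset G} {l : List G}
    (hl : (l : Multiset G) = A.val) (hS : (l.scanl (· + ·) 0).Nodup) :
    IsAlspachOrdering A l := by
  have hsums : ∀ i j, i ≤ l.length → j ≤ l.length → i ≠ j →
      (l.take i).sum ≠ (l.take j).sum := by
    intro i j hi hj hij h
    refine hij ((hS.getElem_inj_iff (hi := by simpa using Nat.lt_succ_of_le hi)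
      (hj := by simpa using Nat.lt_succ_of_le hj)).1 ?_)
    simpa only [List.getElem_scanl_add_zero] using h
  refine ⟨Multiset.coe_nodup.1 (hl ▸ A.nodup), fun x => by rw [← Multiset.mem_coe, hl]; rfl,
    fun i hi hil => ?_, fun i j hi hij hjl => hsums i j (by omega) hjl hij.ne⟩
  simpa using hsums i 0 hil (Nat.zero_le _) (by omega)

theorem isAlspachOrdering_map_of_nodup_scanl {H : Type*} [AddCommGroup H] {f : H →+ G}
    (hf : Injective f) {B : Finset H} {l : List H} (hl : (l : Multiset H) = B.val)
    (hS : (l.scanl (· + ·) 0).Nodup) : IsAlspachOrdering (B.map ⟨f, hf⟩) (l.map f) := by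
  refine isAlspachOrdering_of_nodup_scanl ?_ ?_
  · rw [← Multiset.map_coe, hl, Finset.map_val]; rfl
  · rw [List.scanl_add_zero_map]; exact hS.map hf

theorem exists_isAlspachOrdering_of_subset_range {K : Type*} [AddCommGroup K] [LinearOrder K]
    [IsOrderedAddMonoid K] {g : K →+ G} (hg : Injective g) {A : Finset G}
    (hA : (A : Set G) ⊆ Set.range g) (h0 : (0 : G) ∉ A) (hs : ∑ x ∈ A, x ≠ 0) :
    ∃ l : List G, IsAlspachOrdering A l := by
  obtain ⟨B, rfl⟩ : ∃ B : Finset K, B.map ⟨g, hg⟩ = A := by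
    refine ⟨A.preimage g hg.injOn, Finset.ext fun x => ?_⟩
    simp only [Finset.mem_map, Finset.mem_preimage, Embedding.coeFn_mk]
    refine ⟨fun ⟨y, hy, hyx⟩ => hyx ▸ hy, fun hx => ?_⟩
    obtain ⟨y, rfl⟩ := hA hx
    exact ⟨y, hx, rfl⟩
  have hB0 : (0 : K) ∉ B := fun h => h0 (Finset.mem_map.2 ⟨0, h, map_zero g⟩)
  have hBs : ∑ x ∈ B, x ≠ 0 := by
    rw [Finset.sum_map, Embedding.coeFn_mk, ← map_sum] at hs
    exact fun h => hs (by rw [h, map_zero])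
  obtain ⟨l, hl, hS, -⟩ := exists_nodup_scanl_of_linearOrder B hB0 (Or.inr hBs)
  exact ⟨l.map g, isAlspachOrdering_map_of_nodup_scanl hg hl hS⟩

theorem exists_lex_addMonoidHom_injective_subset_range [IsAddTorsionFree G] (A : Finset G) :
    ∃ (n : ℕ) (g : Lex (Fin n →₀ ℤ) →+ G), Injective g ∧ (A : Set G) ⊆ Set.range g := by
  let H := Submodule.span ℤ (A : Set G)
  have : Module.Finite ℤ H := Module.Finite.span_of_finite ℤ A.finite_toSet
  let e := (toLexAddEquiv (Fin _ →₀ ℤ)).symm.trans (Module.finBasis ℤ H).repr.symm.toAddEquiv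
  refine ⟨_, H.subtype.toAddMonoidHom.comp e.toAddMonoidHom,
    Subtype.val_injective.comp e.injective, fun x hx => ?_⟩
  obtain ⟨y, hy⟩ := e.surjective ⟨x, Submodule.subset_span hx⟩
  exact ⟨y, by simp [hy]⟩

end AddCommGroup

theorem stmt5 (G : Type*) [AddCommGroup G]
    (htf : ∀ (n : ℕ) (g : G), 0 < n → n • g = 0 → g = 0) :
    ∀ A : Finset G, (0 : G) ∉ A → A.card ≤ 11 → ∑ z ∈ A, z ≠ 0 →
      ∃ l : List G, IsAlspachOrdering A l := by
  intro A h0 _ hs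
  have : IsAddTorsionFree G := isAddTorsionFree_iff_not_isOfFinAddOrder.2 fun g hg hfin => by
    obtain ⟨n, hn, hng⟩ := isOfFinAddOrder_iff_nsmul_eq_zero.1 hfin
    exact hg (htf n g hn hng)
  obtain ⟨n, g, hg, hA⟩ := exists_lex_addMonoidHom_injective_subset_range A
  exact exists_isAlspachOrdering_of_subset_range hg hA h0 hs
end

section
/- Fix a positive integer k and assume Alspach's conjecture holds in every torsion-free abelian group for subsets of size k. Then there exists a positive integer N(k) such that for every abelian group G with θ(G) > N(k), every subset A of G \ {0} of size k with ∑_{z∈A} z ≠ 0 admits an ordering of its elements whose partial sums are nonzero and pairwise distinct. -/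
universe u

/-!
Suppose no bound works and pick counterexamples `A m ⊆ G m` with `θ(G m) > m + 1`. Along an
ultrafilter finer than `atTop`, the ultraproduct of the `G m` is torsion-free (an element killed by
`n` is killed in almost every `G m`, where `θ > n`), and the ultraproduct `B` of the `A m` is a
`k`-set avoiding `0` with nonzero sum. An ordering of `B` is valid iff the partial sums
`0, s₁, …, sₖ` are pairwise distinct: finitely many inequalities, each of which then holds in
almost every factor. So the ordering of `B` given by the torsion-free case yields a valid ordering
of some `A m`.
-/

open Finset Function Filter

theorem Finset.exists_injective_image_univ_eq {α : Type*} [DecidableEq α] {A : Finset α} {k : ℕ}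
    (hA : A.card = k) : ∃ a : Fin k → α, Injective a ∧ univ.image a = A := by
  subst hA
  refine ⟨Subtype.val ∘ A.equivFin.symm, Subtype.val_injective.comp A.equivFin.symm.injective, ?_⟩
  ext x
  simp only [mem_image, mem_univ, true_and, comp_apply]
  exact ⟨fun ⟨j, hj⟩ => hj ▸ (A.equivFin.symm j).2, fun hx => ⟨A.equivFin ⟨x, hx⟩, by simp⟩⟩

theorem eq_zero_of_nsmul_eq_zero_of_le {G : Type*} [AddCommGroup G] {N n : ℕ}
    (hG : ∀ g : G, g ≠ 0 → N < addOrderOf g ∨ addOrderOf g = 0) (hn : 0 < n) (hnN : n ≤ N)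
    {g : G} (hg : n • g = 0) : g = 0 := by
  by_contra hg0
  rcases hG g hg0 with hlt | h0
  · have := addOrderOf_le_of_nsmul_eq_zero hn hg
    omega
  · exact addOrderOf_eq_zero_iff'.1 h0 n hn hg

section PartialSums

variable {G H : Type*} [AddCommGroup G] [AddCommGroup H]

/-- `[s₀, s₁, …, sₖ]`, where `sᵢ` is the sum of the first `i` entries; in particular `s₀ = 0`. -/
def partialSums (l : List G) : List G :=
  (List.range (l.length + 1)).map fun i => (l.take i).sum

theorem partialSums_map (φ : G →+ H) (l : List G) :
    partialSums (l.map φ) = (partialSums l).map φ := by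
  simp [partialSums, ← List.map_take, map_list_sum]

theorem nodup_partialSums_iff {l : List G} : (partialSums l).Nodup ↔
    (∀ i : ℕ, 1 ≤ i → i ≤ l.length → (l.take i).sum ≠ 0) ∧
    (∀ i j : ℕ, 1 ≤ i → i < j → j ≤ l.length → (l.take i).sum ≠ (l.take j).sum) := by
  rw [partialSums, List.nodup_map_iff_inj_on List.nodup_range]
  simp only [List.mem_range, Nat.lt_succ_iff]
  constructor
  · intro h
    refine ⟨fun i hi hil h0 => ?_, fun i j hi hij hj heq => ?_⟩
    · have := h i hil 0 (Nat.zero_le _) (by simpa using h0)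
      omega
    · have := h i (by omega) j hj heq
      omega
  · rintro ⟨hzero, hdist⟩
    have hlt : ∀ i j, i < j → j ≤ l.length → (l.take i).sum ≠ (l.take j).sum := by
      intro i j hij hj
      rcases Nat.eq_zero_or_pos i with rfl | hi
      · simpa using (hzero j hij hj).symm
      · exact hdist i j hi hij hj
    intro i hi j hj heq
    by_contra hne
    rcases Nat.lt_or_gt_of_ne hne with h | h
    · exact hlt i j h hj heq
    · exact hlt j i h hi heq.symm

theorem isAlspachOrdering_iff {A : Finset G} {l : List G} :
    IsAlspachOrdering A l ↔ l.Nodup ∧ (∀ x, x ∈ l ↔ x ∈ A) ∧ (partialSums l).Nodup := by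
  rw [IsAlspachOrdering, nodup_partialSums_iff]

theorem exists_isAlspachOrdering_image_iff {ι : Type*} [Fintype ι] [DecidableEq G] {a : ι → G}
    (ha : Injective a) : (∃ l, IsAlspachOrdering (univ.image a) l) ↔
      ∃ L : List ι, L.Nodup ∧ (∀ j, j ∈ L) ∧ (partialSums (L.map a)).Nodup := by
  simp only [isAlspachOrdering_iff, mem_image, mem_univ, true_and]
  constructor
  · rintro ⟨l, hnd, hmem, hps⟩
    have : CanLift G ι a (· ∈ Set.range a) := ⟨fun _ h => h⟩
    lift l to List ι using fun x hx => (hmem x).1 hx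
    exact ⟨l, hnd.of_map a, fun j => by simpa [ha.eq_iff] using (hmem (a j)).2 ⟨j, rfl⟩, hps⟩
  · rintro ⟨L, hnd, hmem, hps⟩
    exact ⟨L.map a, hnd.map ha, fun x => by simp [hmem], hps⟩

end PartialSums

def eventuallyZero {ι : Type*} (l : Filter ι) (G : ι → Type*) [∀ i, AddCommGroup (G i)] :
    AddSubgroup (∀ i, G i) where
  carrier := {f | ∀ᶠ i in l, f i = 0}
  zero_mem' := Eventually.of_forall fun _ => rfl
  add_mem' hf hg := by
    filter_upwards [hf, hg] with i hfi hgi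
    simp [hfi, hgi]
  neg_mem' hf := by
    filter_upwards [hf] with i hfi
    simp [hfi]

abbrev Ultraproduct {ι : Type*} (U : Ultrafilter ι) (G : ι → Type*) [∀ i, AddCommGroup (G i)] :=
  (∀ i, G i) ⧸ eventuallyZero (U : Filter ι) G

namespace Ultraproduct

variable {ι : Type*} {U : Ultrafilter ι} {G : ι → Type*} [∀ i, AddCommGroup (G i)]

variable (U) in
def mk : (∀ i, G i) →+ Ultraproduct U G :=
  QuotientAddGroup.mk' _

theorem mk_surjective : Surjective (mk U (G := G)) :=
  QuotientAddGroup.mk'_surjective _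

theorem mk_eq_zero_iff {f : ∀ i, G i} : mk U f = 0 ↔ ∀ᶠ i in U, f i = 0 :=
  QuotientAddGroup.eq_zero_iff f

theorem mk_ne_zero_iff {f : ∀ i, G i} : mk U f ≠ 0 ↔ ∀ᶠ i in U, f i ≠ 0 := by
  rw [Ne, mk_eq_zero_iff, Ultrafilter.eventually_not]

theorem mk_ne_mk_iff {f g : ∀ i, G i} : mk U f ≠ mk U g ↔ ∀ᶠ i in U, f i ≠ g i := by
  rw [← sub_ne_zero, ← map_sub, mk_ne_zero_iff]
  simp only [Pi.sub_apply, sub_ne_zero]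

theorem eq_zero_of_nsmul_eq_zero (hG : ∀ n, 0 < n → ∀ᶠ i in U, ∀ g : G i, n • g = 0 → g = 0)
    {n : ℕ} (hn : 0 < n) {x : Ultraproduct U G} (hx : n • x = 0) : x = 0 := by
  obtain ⟨f, rfl⟩ := mk_surjective x
  rw [← map_nsmul, mk_eq_zero_iff] at hx
  rw [mk_eq_zero_iff]
  filter_upwards [hG n hn, hx] with i hi hxi
  exact hi _ hxi

theorem eventually_nodup_map_eval {l : List (∀ i, G i)} (h : (l.map (mk U)).Nodup) :
    ∀ᶠ i in U, (l.map fun f => f i).Nodup := by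
  induction l with
  | nil => simp
  | cons f l ih =>
    rw [List.map_cons, List.nodup_cons] at h
    have hf : ∀ᶠ i in U, ∀ g ∈ l, f i ≠ g i :=
      (l.finite_toSet.eventually_all).2 fun g hg =>
        mk_ne_mk_iff.1 fun hfg => h.1 (List.mem_map.2 ⟨g, hg, hfg.symm⟩)
    filter_upwards [hf, ih h.2] with i hfi hli
    simp only [List.map_cons, List.nodup_cons, List.mem_map, not_exists, not_and]
    exact ⟨fun g hg hgf => hfi g hg hgf.symm, hli⟩

theorem injective_mk_of_injective {κ : Type*} {a : ∀ i, κ → G i} (ha : ∀ i, Injective (a i)) :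
    Injective fun j => mk U fun i => a i j := fun j j' h => by
  by_contra hne
  exact mk_ne_mk_iff.2 (Eventually.of_forall fun i => (ha i).ne hne) h

theorem eventually_exists_isAlspachOrdering_image {κ : Type*} [Fintype κ]
    [DecidableEq (Ultraproduct U G)] [∀ i, DecidableEq (G i)] {a : ∀ i, κ → G i}
    (ha : ∀ i, Injective (a i))
    (h : ∃ l, IsAlspachOrdering (univ.image fun j => mk U fun i => a i j) l) :
    ∀ᶠ i in U, ∃ l, IsAlspachOrdering (univ.image (a i)) l := by
  obtain ⟨L, hnd, hmem, hps⟩ :=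
    (exists_isAlspachOrdering_image_iff (injective_mk_of_injective ha)).1 h
  have hmap : L.map (fun j => mk U fun i => a i j) = (L.map fun j i => a i j).map (mk U) := by
    simp [List.map_map, comp_def]
  rw [hmap, partialSums_map] at hps
  filter_upwards [eventually_nodup_map_eval hps] with i hi
  refine (exists_isAlspachOrdering_image_iff (ha i)).2 ⟨L, hnd, hmem, ?_⟩
  have heval : L.map (a i) = (L.map fun j i => a i j).map (Pi.evalAddMonoidHom G i) := by
    simp [List.map_map, comp_def]
  rwa [heval, partialSums_map]

theorem exists_limit_finset {k : ℕ} {A : ∀ i, Finset (G i)} (hcard : ∀ i, (A i).card = k)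
    (h0 : ∀ i, (0 : G i) ∉ A i) (hsum : ∀ i, ∑ z ∈ A i, z ≠ 0) :
    ∃ B : Finset (Ultraproduct U G), 0 ∉ B ∧ B.card = k ∧ ∑ z ∈ B, z ≠ 0 ∧
      ((∃ l, IsAlspachOrdering B l) → ∀ᶠ i in U, ∃ l, IsAlspachOrdering (A i) l) := by
  classical
  choose a ha ha_image using fun i => exists_injective_image_univ_eq (hcard i)
  set b : Fin k → Ultraproduct U G := fun j => mk U fun i => a i j
  have hb : Injective b := injective_mk_of_injective ha
  refine ⟨univ.image b, ?_, by rw [card_image_of_injective _ hb, card_fin], ?_, fun h => ?_⟩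
  · simp only [mem_image, mem_univ, true_and, not_exists]
    refine fun j => mk_ne_zero_iff.2 (Eventually.of_forall fun i hi => h0 i ?_)
    rw [← ha_image i, ← hi]
    exact mem_image_of_mem _ (mem_univ j)
  · rw [sum_image hb.injOn, ← map_sum, mk_ne_zero_iff]
    refine Eventually.of_forall fun i => ?_
    rw [Finset.sum_apply]
    have := hsum i
    rwa [← ha_image i, sum_image (ha i).injOn] at this
  · filter_upwards [eventually_exists_isAlspachOrdering_image ha h] with i hi
    rwa [← ha_image i]

end Ultraproduct

theorem stmt7_general (k : ℕ)
    (hyp : ∀ (G : Type u) [AddCommGroup G],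
      (∀ (n : ℕ) (g : G), 0 < n → n • g = 0 → g = 0) →
      ∀ A : Finset G, (0 : G) ∉ A → A.card = k → ∑ z ∈ A, z ≠ 0 →
        ∃ l : List G, IsAlspachOrdering A l) :
    ∃ N : ℕ, 0 < N ∧ ∀ (G : Type u) [AddCommGroup G],
      (∀ g : G, g ≠ 0 → N < addOrderOf g ∨ addOrderOf g = 0) →
      ∀ A : Finset G, (0 : G) ∉ A → A.card = k → ∑ z ∈ A, z ≠ 0 →
        ∃ l : List G, IsAlspachOrdering A l := by
  by_contra! hcon
  choose G _ hθ A h0A hcard hsum hno using fun m : ℕ => hcon (m + 1) m.succ_pos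
  let U := Ultrafilter.of (atTop : Filter ℕ)
  have htf : ∀ n, 0 < n → ∀ᶠ m in U, ∀ g : G m, n • g = 0 → g = 0 := fun n hn =>
    Eventually.mono (Ultrafilter.of_le _ (eventually_ge_atTop n)) fun m hm _ hg =>
      eq_zero_of_nsmul_eq_zero_of_le (hθ m) hn (by omega) hg
  obtain ⟨B, hB0, hBcard, hBsum, hB⟩ := Ultraproduct.exists_limit_finset (U := U) hcard h0A hsum
  have hB_ordering := hyp _ (fun _ _ hn hx => Ultraproduct.eq_zero_of_nsmul_eq_zero htf hn hx)
    B hB0 hBcard hBsum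
  obtain ⟨m, l, hl⟩ := (hB hB_ordering).exists
  exact hno m l hl

theorem stmt7 (k : ℕ) (hk : 0 < k)
    (hyp : ∀ (G : Type u) [AddCommGroup G],
      (∀ (n : ℕ) (g : G), 0 < n → n • g = 0 → g = 0) →
      ∀ A : Finset G, (0 : G) ∉ A → A.card = k → ∑ z ∈ A, z ≠ 0 →
        ∃ l : List G, IsAlspachOrdering A l) :
    ∃ N : ℕ, 0 < N ∧ ∀ (G : Type u) [AddCommGroup G],
      (∀ g : G, g ≠ 0 → N < addOrderOf g ∨ addOrderOf g = 0) →
      ∀ A : Finset G, (0 : G) ∉ A → A.card = k → ∑ z ∈ A, z ≠ 0 →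
        ∃ l : List G, IsAlspachOrdering A l :=
  stmt7_general k hyp
end

section
/- Let p be a prime, k ≥ 2 with p > k, and let A ⊆ ℤ/pℤ \ {0} with |A| = k and ∑_{z∈A} z ≠ 0. If there exists an index j ∈ {1,…,k} such that the coefficient c_{k,j} of the monomial x₁^{k−1}⋯x_{j−1}^{k−1}·x_j^{k−2}·x_{j+1}^{k−1}⋯x_k^{k−1} in F_k = g_k/(x₁+⋯+x_k) is nonzero modulo p, then there is an ordering of the elements of A whose partial sums are all nonzero and pairwise distinct. -/
open MvPolynomial

/-- `g_k = ∏_{1 ≤ i < j ≤ k} (x_j - x_i)(x_i + ⋯ + x_j)`, with variables indexed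
by `Fin k` (so `x₁` corresponds to index `0`, …, `x_k` to index `k-1`). -/
noncomputable def gPoly (R : Type*) [CommRing R] (k : ℕ) : MvPolynomial (Fin k) R :=
  ∏ j : Fin k, ∏ i ∈ Finset.univ.filter (· < j),
    ((X j - X i) * ∑ r ∈ Finset.Icc i j, X r)

/-!
Reduce `F` modulo `p`. Its total degree is `k(k-1) - 1`, the degree of the monomial
`x^t`, `t = (k-1, …, k-2, …, k-1)`, so the Combinatorial Nullstellensatz with every
`A_i = A` (`t_i ≤ k - 1 < |A|`) gives `a ∈ Aᵏ` with `F(a) ≠ 0`. Each `x_i - x_j` is a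
prime dividing `g_k = F · (x₁ + ⋯ + x_k)` but not the linear form, so it divides `F` and the
`a_i` are distinct: they enumerate `A`. Hence `g_k(a) = F(a) · ∑_{z ∈ A} z ≠ 0`, and the
factors `a_u + ⋯ + a_v` of `g_k(a)` are the differences of partial sums of `a₁, …, a_k`.
-/

open Finset

namespace MvPolynomial

variable {σ R : Type*} [CommRing R]

theorem prime_X_sub_X [IsDomain R] {i j : σ} (h : i ≠ j) :
    Prime (X i - X j : MvPolynomial σ R) := by
  classical
  let e : σ ≃ Option {x : σ // x ≠ i} := (Equiv.optionSubtypeNe i).symm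
  let E := (renameEquiv R e).trans (optionEquivLeft R {x : σ // x ≠ i})
  have himg : E (X i - X j) = Polynomial.X - Polynomial.C (X ⟨j, h.symm⟩) := by
    simp only [E, map_sub, AlgEquiv.trans_apply, renameEquiv_apply, rename_X, e,
      Equiv.optionSubtypeNe_symm_self, Equiv.optionSubtypeNe_symm_of_ne h.symm,
      optionEquivLeft_X_none, optionEquivLeft_X_some]
  rw [← MulEquiv.prime_iff E.toRingEquiv.toMulEquiv]
  exact himg ▸ Polynomial.prime_X_sub_C _

theorem injective_of_eval_ne_zero_of_X_sub_X_dvd {F : MvPolynomial σ R}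
    (hdvd : ∀ i j, i ≠ j → X i - X j ∣ F) {a : σ → R} (ha : eval a F ≠ 0) :
    Function.Injective a := by
  intro i j hij
  by_contra hne
  obtain ⟨q, rfl⟩ := hdvd i j hne
  simp [hij] at ha

theorem sum_X_ne_zero [Fintype σ] [Nonempty σ] [Nontrivial R] :
    (∑ i : σ, X i : MvPolynomial σ R) ≠ 0 := by
  classical
  obtain ⟨i⟩ := ‹Nonempty σ›
  intro h
  have := congrArg (coeff (Finsupp.single i 1)) h
  rw [coeff_sum, sum_eq_single i (fun b _ hb => by
      rw [coeff_X, if_neg (fun he => hb (Finsupp.single_left_injective one_ne_zero he))])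
    (by simp), coeff_X, if_pos rfl, coeff_zero] at this
  exact one_ne_zero this

end MvPolynomial

section gPoly

variable {R : Type*} [CommRing R]

theorem map_gPoly {S : Type*} [CommRing S] (f : R →+* S) (k : ℕ) :
    map f (gPoly R k) = gPoly S k := by
  simp only [gPoly, map_prod, map_mul, map_sub, map_sum, map_X]

theorem gPoly_isHomogeneous (k : ℕ) :
    (gPoly R k).IsHomogeneous (k * (k - 1)) := by
  have hfactors : (gPoly R k).IsHomogeneous (∑ j : Fin k, ∑ _i ∈ univ.filter (· < j), 2) :=
    IsHomogeneous.prod _ _ _ fun j _ => IsHomogeneous.prod _ _ _ fun i _ =>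
      ((isHomogeneous_X _ j).sub (isHomogeneous_X _ i)).mul
        (IsHomogeneous.sum _ _ _ fun r _ => isHomogeneous_X _ r)
  convert hfactors using 1
  calc k * (k - 1) = (∑ j ∈ range k, j) * 2 := (sum_range_id_mul_two k).symm
    _ = ∑ j : Fin k, ∑ _i ∈ univ.filter (· < j), 2 := by
      rw [sum_mul, ← Fin.sum_univ_eq_sum_range (· * 2)]
      refine sum_congr rfl fun j _ => ?_
      rw [sum_const, filter_gt_eq_Iio, Fin.card_Iio, smul_eq_mul]

theorem X_sub_X_dvd_gPoly_of_lt {k : ℕ} {i j : Fin k} (h : j < i) :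
    (X i - X j : MvPolynomial (Fin k) R) ∣ gPoly R k := by
  unfold gPoly
  refine dvd_trans ?_ (dvd_prod_of_mem _ (mem_univ i))
  exact (dvd_mul_right _ _).trans (dvd_prod_of_mem _ (mem_filter.mpr ⟨mem_univ j, h⟩))

theorem X_sub_X_dvd_gPoly {k : ℕ} {i j : Fin k} (h : i ≠ j) :
    (X i - X j : MvPolynomial (Fin k) R) ∣ gPoly R k := by
  rcases h.lt_or_gt with hlt | hlt
  · rw [← neg_sub, neg_dvd]
    exact X_sub_X_dvd_gPoly_of_lt hlt
  · exact X_sub_X_dvd_gPoly_of_lt hlt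

theorem sum_Icc_ne_zero_of_eval_gPoly_ne_zero {k : ℕ} {a : Fin k → R}
    (h : eval a (gPoly R k) ≠ 0) {u v : Fin k} (huv : u < v) : ∑ r ∈ Icc u v, a r ≠ 0 := by
  intro h0
  simp only [gPoly, map_prod] at h
  refine h (prod_eq_zero (mem_univ v) (prod_eq_zero (mem_filter.mpr ⟨mem_univ u, huv⟩) ?_))
  simp [h0]

variable [IsDomain R] {k : ℕ} {F : MvPolynomial (Fin k) R}

theorem X_sub_X_dvd_of_mul_sum_X_eq_gPoly (hF : F * ∑ i, X i = gPoly R k) (hk : (k : R) ≠ 0)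
    {i j : Fin k} (h : i ≠ j) : X i - X j ∣ F := by
  refine ((prime_X_sub_X h).dvd_or_dvd (hF ▸ X_sub_X_dvd_gPoly h)).resolve_right ?_
  rintro ⟨q, hq⟩
  exact hk (by simpa using congrArg (eval fun _ => (1 : R)) hq)

theorem totalDegree_add_one_of_mul_sum_X_eq_gPoly (hF : F * ∑ i, X i = gPoly R k)
    (hF0 : F ≠ 0) : F.totalDegree + 1 = k * (k - 1) := by
  obtain rfl | hk := eq_or_ne k 0
  · simp [gPoly] at hF
  have : NeZero k := ⟨hk⟩
  have hsum : (∑ i : Fin k, X i : MvPolynomial (Fin k) R).totalDegree = 1 :=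
    (IsHomogeneous.sum _ _ _ fun i _ => isHomogeneous_X R i).totalDegree sum_X_ne_zero
  have hprod := totalDegree_mul_of_isDomain hF0 (sum_X_ne_zero (σ := Fin k) (R := R))
  rw [hF, hsum, (gPoly_isHomogeneous k).totalDegree
    (hF ▸ mul_ne_zero hF0 sum_X_ne_zero)] at hprod
  exact hprod.symm

end gPoly

theorem degree_sum_single_ite_add_one {k : ℕ} (hk : 2 ≤ k) (j : Fin k) :
    (∑ i : Fin k, Finsupp.single i (if i = j then k - 2 else k - 1)).degree + 1 =
      k * (k - 1) := by
  rw [map_sum]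
  simp only [Finsupp.degree_single]
  rw [← add_sum_erase _ _ (mem_univ j), if_pos rfl,
    sum_congr rfl fun i hi => if_neg (ne_of_mem_erase hi), sum_const,
    card_erase_of_mem (mem_univ j), card_univ, Fintype.card_fin, smul_eq_mul]
  obtain ⟨m, rfl⟩ : ∃ m, k = m + 2 := ⟨k - 2, by omega⟩
  rw [show m + 2 - 2 = m from rfl, show m + 2 - 1 = m + 1 from rfl]
  ring

section Orderings

variable {G : Type*} [AddCommGroup G] {k : ℕ}

theorem sum_take_ofFn_sub_sum_take_ofFn (a : Fin k → G) {i j : ℕ} (hij : i < j) (hj : j ≤ k) :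
    ((List.ofFn a).take j).sum - ((List.ofFn a).take i).sum =
      ∑ r ∈ Icc (⟨i, by omega⟩ : Fin k) ⟨j - 1, by omega⟩, a r := by
  have hdisj : Disjoint (Icc (⟨i, by omega⟩ : Fin k) ⟨j - 1, by omega⟩)
      (univ.filter fun r : Fin k => r.val < i) :=
    disjoint_left.mpr fun r h1 h2 => by simp [Fin.le_def] at h1 h2; omega
  rw [List.sum_take_ofFn, List.sum_take_ofFn, sub_eq_iff_eq_add, ← sum_union hdisj]
  congr 1
  ext r
  simp [Fin.le_def]
  omega

theorem isAlspachOrdering_ofFn {A : Finset G} {a : Fin k → G} (hinj : Function.Injective a)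
    (hrange : Set.range a = A) (hseg : ∀ u v, u ≤ v → ∑ r ∈ Icc u v, a r ≠ 0) :
    IsAlspachOrdering A (List.ofFn a) := by
  have hdiff : ∀ i j, i < j → j ≤ (List.ofFn a).length →
      ((List.ofFn a).take j).sum - ((List.ofFn a).take i).sum ≠ 0 := by
    intro i j hij hj
    rw [List.length_ofFn] at hj
    rw [sum_take_ofFn_sub_sum_take_ofFn a hij hj]
    exact hseg _ _ (by simp [Fin.le_def]; omega)
  refine ⟨List.nodup_ofFn.mpr hinj, fun x => by rw [List.mem_ofFn', hrange, mem_coe], ?_, ?_⟩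
  · intro i hi hle
    simpa using hdiff 0 i hi hle
  · intro i j _ hij hj h
    exact hdiff i j hij hj (by rw [h, sub_self])

end Orderings

theorem isAlspachOrdering_ofFn_of_eval_ne_zero {R : Type*} [CommRing R] [IsDomain R] {k : ℕ}
    {F : MvPolynomial (Fin k) R} (hF : F * ∑ i, X i = gPoly R k)
    (hdvd : ∀ i i', i ≠ i' → X i - X i' ∣ F) {A : Finset R} (hA0 : 0 ∉ A) (hcard : #A = k)
    (hsum : ∑ z ∈ A, z ≠ 0) {a : Fin k → R} (haA : ∀ i, a i ∈ A) (ha : eval a F ≠ 0) :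
    IsAlspachOrdering A (List.ofFn a) := by
  classical
  have hinj : Function.Injective a := injective_of_eval_ne_zero_of_X_sub_X_dvd hdvd ha
  have himage : univ.image a = A :=
    eq_of_subset_of_card_le (by simpa [subset_iff] using haA)
      (by rw [card_image_of_injective _ hinj, card_univ, Fintype.card_fin, hcard])
  have hg : eval a (gPoly R k) ≠ 0 := by
    rw [← hF, map_mul, map_sum]
    simp only [eval_X]
    rw [← himage, sum_image fun _ _ _ _ h => hinj h] at hsum
    exact mul_ne_zero ha hsum
  refine isAlspachOrdering_ofFn hinj (by rw [← himage, coe_image, coe_univ, Set.image_univ])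
    fun u v huv => ?_
  rcases huv.lt_or_eq with hlt | rfl
  · exact sum_Icc_ne_zero_of_eval_gPoly_ne_zero hg hlt
  · rw [Icc_self, sum_singleton]
    exact fun h => hA0 (h ▸ haA u)

theorem stmt13_general (p k : ℕ) (hp : p.Prime) (hk : 2 ≤ k)
    (A : Finset (ZMod p)) (hA0 : (0 : ZMod p) ∉ A) (hcard : A.card = k)
    (hsum : ∑ z ∈ A, z ≠ 0)
    (F : MvPolynomial (Fin k) ℤ) (hF : F * (∑ i : Fin k, X i) = gPoly ℤ k)
    (j : Fin k)
    (hc : ¬ ((p : ℤ) ∣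
      F.coeff (∑ i : Fin k, Finsupp.single i (if i = j then k - 2 else k - 1)))) :
    ∃ l : List (ZMod p), IsAlspachOrdering A l := by
  have : Fact p.Prime := ⟨hp⟩
  set t := ∑ i : Fin k, Finsupp.single i (if i = j then k - 2 else k - 1)
  set Fp := map (Int.castRingHom (ZMod p)) F
  have hFp : Fp * ∑ i, X i = gPoly (ZMod p) k := by
    simp only [Fp, ← map_gPoly (Int.castRingHom (ZMod p)), ← hF, map_mul, map_sum, map_X]
  have hdvd (i i' : Fin k) (h : i ≠ i') : X i - X i' ∣ Fp := by
    simpa using map_dvd (map (Int.castRingHom (ZMod p)))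
      (X_sub_X_dvd_of_mul_sum_X_eq_gPoly hF (by norm_cast; omega) h)
  have hFt : Fp.coeff t ≠ 0 := by
    rwa [coeff_map, Ne, eq_intCast, ZMod.intCast_zmod_eq_zero_iff_dvd]
  have hdeg : Fp.totalDegree = t.degree := by
    have := totalDegree_add_one_of_mul_sum_X_eq_gPoly hFp fun h0 => hFt (by rw [h0, coeff_zero])
    have : t.degree + 1 = k * (k - 1) := degree_sum_single_ite_add_one hk j
    omega
  have ht (i : Fin k) : t i < #A := by
    simp only [t, hcard, Finsupp.finsetSum_apply, Finsupp.single_apply, sum_ite_eq', mem_univ,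
      if_true]
    split_ifs <;> omega
  obtain ⟨a, haA, ha⟩ :=
    combinatorial_nullstellensatz_exists_eval_nonzero Fp t hFt hdeg (fun _ => A) ht
  exact ⟨_, isAlspachOrdering_ofFn_of_eval_ne_zero hFp hdvd hA0 hcard hsum haA ha⟩

theorem stmt13 (p k : ℕ) (hp : p.Prime) (hk : 2 ≤ k) (hpk : k < p)
    (A : Finset (ZMod p)) (hA0 : (0 : ZMod p) ∉ A) (hcard : A.card = k)
    (hsum : ∑ z ∈ A, z ≠ 0)
    (F : MvPolynomial (Fin k) ℤ) (hF : F * (∑ i : Fin k, X i) = gPoly ℤ k)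
    (j : Fin k)
    (hc : ¬ ((p : ℤ) ∣
      F.coeff (∑ i : Fin k, Finsupp.single i (if i = j then k - 2 else k - 1)))) :
    ∃ l : List (ZMod p), IsAlspachOrdering A l :=
  stmt13_general p k hp hk A hA0 hcard hsum F hF j hc
end
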